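/- Let n = m + p and k ≥ 1, write points of ℝⁿ = ℝᵐ × ℝᵖ as x = (y, z), and fix H > 0; let D = {(y,z) ∈ ℝᵐ × ℝᵖ : ‖y‖ ≤ H}. Let a : D → ℝ and b : D → ℝᵏ be continuous, and let α : [0,∞) → [0,∞) be of class K. Assume: (i) (control Lyapunov condition) for every x = (y,z) ∈ D, if b(x) = 0 then a(x) ≤ -α(‖y‖); (ii) (small control property) for every ε > 0 and every x₀ ∈ D with zero y-component, there exists δ > 0 such that every x = (y,z) ∈ D with ‖x - x₀‖ < δ admits some u ∈ ℝᵏ with ‖u‖ < ε and a(x) + ⟨b(x), u⟩ ≤ -α(‖y‖). Then the feedback law H : D → ℝᵏ defined by H(x) = 0 if b(x) = 0; H(x) = -(b(x)/‖b(x)‖²)·(a(x) + √(a(x)² + ‖b(x)‖⁴)) if b(x) ≠ 0 and 2√(a(x)² + ‖b(x)‖⁴) ≥ α(‖y‖); and H(x) = -(b(x)/(2‖b(x)‖²))·(2a(x) + α(‖y‖)) otherwise, is continuous on D, and H(x) = 0 at every x ∈ D with b(x) = 0; in particular H(0,z) = 0 whenever b(0,z) = 0. -/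

import Mathlib

/-!
Write `H x = F (a x, b x, α ‖y‖)` for a fixed feedback map `F` on `ℝ × ℝᵏ × ℝ`. Where `b ≠ 0`,
`F` is built from two continuous expressions that agree on the switching surface
`2 √(a² + ‖b‖⁴) = c`, so it is continuous there. Where `b = 0` the feedback vanishes, and the
estimate `‖F(a, b, c)‖ · ‖b‖ ≤ max (2a + c) 0 + ‖b‖²` forces `H → 0` as soon as `2a + c` is
eventually at most `ε ‖b‖` for every `ε > 0`: near a point with `y ≠ 0` the control Lyapunov
condition and strict monotonicity of `α` make `2a + α ‖y‖` negative, and near a point with `y = 0`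
the small control property and Cauchy–Schwarz give `2a + α ‖y‖ ≤ 2 ‖b‖ ‖u‖` with `‖u‖` small.
-/

open scoped Classical

open RealInnerProductSpace

open Filter Topology

section NormedSpace

variable {E : Type*} [NormedAddCommGroup E] [NormedSpace ℝ E]

/-- The feedback law (7), with `c` in the role of `α ‖y‖`. -/
noncomputable def sontagFeedback (a : ℝ) (b : E) (c : ℝ) : E :=
  if b = 0 then 0
  else if 2 * √(a ^ 2 + ‖b‖ ^ 4) ≥ c then (-(a + √(a ^ 2 + ‖b‖ ^ 4)) / ‖b‖ ^ 2) • b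
  else (-(2 * a + c) / (2 * ‖b‖ ^ 2)) • b

@[simp]
theorem sontagFeedback_zero (a c : ℝ) : sontagFeedback a (0 : E) c = 0 := if_pos rfl

theorem norm_sontagFeedback_mul_norm_le {a c : ℝ} (b : E) (hc : 0 ≤ c) :
    ‖sontagFeedback a b c‖ * ‖b‖ ≤ max (2 * a + c) 0 + ‖b‖ ^ 2 := by
  have habs : |a| ≤ √(a ^ 2 + ‖b‖ ^ 4) :=
    Real.abs_le_sqrt (le_add_of_nonneg_right (by positivity))
  have hle : √(a ^ 2 + ‖b‖ ^ 4) ≤ |a| + ‖b‖ ^ 2 :=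
    Real.sqrt_le_iff.2 ⟨by positivity, by nlinarith [sq_abs a, abs_nonneg a]⟩
  have hmax := le_max_left (2 * a + c) 0
  have hmax' := le_max_right (2 * a + c) 0
  have hsmul : ∀ t : ℝ, ‖t • b‖ * ‖b‖ = |t| * ‖b‖ ^ 2 := fun t => by
    rw [norm_smul, Real.norm_eq_abs, mul_assoc, sq]
  unfold sontagFeedback
  split_ifs with hb hswitch
  · simp only [norm_zero, zero_mul]; positivity
  · have hb2 : 0 < ‖b‖ ^ 2 := by positivity
    rw [hsmul, abs_div, abs_neg, abs_of_pos hb2, div_mul_cancel₀ _ hb2.ne',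
      abs_of_nonneg (by linarith [neg_abs_le a])]
    rcases abs_cases a with ⟨h, _⟩ | ⟨h, _⟩ <;> linarith
  · have hb2 : 0 < 2 * ‖b‖ ^ 2 := by positivity
    rw [hsmul, abs_div, abs_neg, abs_of_pos hb2, abs_of_nonneg (by linarith [neg_abs_le a]),
      div_mul_eq_mul_div, div_le_iff₀ hb2]
    nlinarith

theorem norm_sontagFeedback_le {a c U : ℝ} {b : E} (hc : 0 ≤ c) (hU : 0 ≤ U)
    (h : 2 * a + c ≤ U * ‖b‖) : ‖sontagFeedback a b c‖ ≤ U + ‖b‖ := by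
  rcases eq_or_ne b 0 with rfl | hb
  · simpa using hU
  have hbpos : 0 < ‖b‖ := norm_pos_iff.2 hb
  refine le_of_mul_le_mul_right ?_ hbpos
  calc ‖sontagFeedback a b c‖ * ‖b‖ ≤ max (2 * a + c) 0 + ‖b‖ ^ 2 :=
        norm_sontagFeedback_mul_norm_le b hc
    _ ≤ U * ‖b‖ + ‖b‖ ^ 2 := by gcongr; exact max_le h (by positivity)
    _ = (U + ‖b‖) * ‖b‖ := by ring

theorem continuousOn_sontagFeedback :
    ContinuousOn (fun q : ℝ × E × ℝ => sontagFeedback q.1 q.2.1 q.2.2) {q | q.2.1 ≠ 0} := by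
  have hr : Continuous fun q : ℝ × E × ℝ => 2 * √(q.1 ^ 2 + ‖q.2.1‖ ^ 4) := by fun_prop
  have hc : Continuous fun q : ℝ × E × ℝ => q.2.2 := by fun_prop
  refine ContinuousOn.congr (f := fun q : ℝ × E × ℝ =>
      if q.2.2 ≤ 2 * √(q.1 ^ 2 + ‖q.2.1‖ ^ 4) then
        (-(q.1 + √(q.1 ^ 2 + ‖q.2.1‖ ^ 4)) / ‖q.2.1‖ ^ 2) • q.2.1
      else (-(2 * q.1 + q.2.2) / (2 * ‖q.2.1‖ ^ 2)) • q.2.1) ?_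
    fun q hq => if_neg hq
  refine ContinuousOn.if (fun q ⟨_, hq⟩ => ?_) ?_ ?_
  · rw [frontier_le_subset_eq hc hr hq]
    congr 1
    ring
  · exact ContinuousOn.mono (by fun_prop (disch := simp_all)) Set.inter_subset_left
  · exact ContinuousOn.mono (by fun_prop (disch := simp_all)) Set.inter_subset_left

theorem ContinuousWithinAt.sontagFeedback {X : Type*} [TopologicalSpace X] {a c : X → ℝ}
    {b : X → E} {s : Set X} {x₀ : X} (ha : ContinuousWithinAt a s x₀)
    (hb : ContinuousWithinAt b s x₀) (hc : ContinuousWithinAt c s x₀) (hb₀ : b x₀ ≠ 0) :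
    ContinuousWithinAt (fun x => sontagFeedback (a x) (b x) (c x)) s x₀ :=
  (continuousOn_sontagFeedback.continuousAt
    ((isOpen_ne_fun (by fun_prop) continuous_const).mem_nhds hb₀)).comp_continuousWithinAt
    (ha.prodMk (hb.prodMk hc))

variable {X : Type*} {l : Filter X} {a c : X → ℝ} {b : X → E}

theorem tendsto_sontagFeedback_zero (hc : ∀ᶠ x in l, 0 ≤ c x) (hb : Tendsto b l (𝓝 0))
    (hab : ∀ ε > 0, ∀ᶠ x in l, 2 * a x + c x ≤ ε * ‖b x‖) :
    Tendsto (fun x => sontagFeedback (a x) (b x) (c x)) l (𝓝 0) := by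
  refine NormedAddGroup.tendsto_nhds_zero.2 fun ε hε => ?_
  filter_upwards [hc, hab (ε / 2) (half_pos hε),
    NormedAddGroup.tendsto_nhds_zero.1 hb (ε / 2) (half_pos hε)] with x hcx habx hbx
  linarith [norm_sontagFeedback_le hcx (half_pos hε).le habx]

end NormedSpace

section InnerProductSpace

variable {E : Type*} [NormedAddCommGroup E] [InnerProductSpace ℝ E]
  {X : Type*} {l : Filter X} {a c : X → ℝ} {b : X → E}

theorem tendsto_sontagFeedback_zero_of_small_control (hc : ∀ᶠ x in l, 0 ≤ c x)
    (hb : Tendsto b l (𝓝 0))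
    (hsmall : ∀ ε > 0, ∀ᶠ x in l, ∃ u : E, ‖u‖ < ε ∧ a x + ⟪b x, u⟫ ≤ -c x) :
    Tendsto (fun x => sontagFeedback (a x) (b x) (c x)) l (𝓝 0) := by
  refine tendsto_sontagFeedback_zero hc hb fun ε hε => ?_
  filter_upwards [hc, hsmall (ε / 2) (half_pos hε)] with x hcx ⟨u, hu, hau⟩
  have hcs : -⟪b x, u⟫ ≤ ‖b x‖ * ‖u‖ := by
    simpa [inner_neg_right] using real_inner_le_norm (b x) (-u)
  nlinarith [norm_nonneg (b x)]

end InnerProductSpace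

theorem sontag_partial_feedback_continuous_general
    (m p k : ℕ)
    (D : Set (EuclideanSpace ℝ (Fin m) × EuclideanSpace ℝ (Fin p)))
    (a : EuclideanSpace ℝ (Fin m) × EuclideanSpace ℝ (Fin p) → ℝ)
    (b : EuclideanSpace ℝ (Fin m) × EuclideanSpace ℝ (Fin p) → EuclideanSpace ℝ (Fin k))
    (ha : ContinuousOn a D) (hb : ContinuousOn b D)
    (α : ℝ → ℝ)
    (hαcont : ContinuousOn α (Set.Ici 0))
    (hαmono : StrictMonoOn α (Set.Ici 0))
    (hα0 : α 0 = 0)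
    (hαnonneg : ∀ r ∈ Set.Ici (0 : ℝ), 0 ≤ α r)
    -- (i) control Lyapunov condition
    (hclf : ∀ x ∈ D, b x = 0 → a x ≤ -α ‖x.1‖)
    -- (ii) small control property
    (hscp : ∀ ε > (0 : ℝ), ∀ x₀ ∈ D, x₀.1 = 0 →
      ∃ δ > (0 : ℝ), ∀ x ∈ D, ‖x - x₀‖ < δ →
        ∃ u : EuclideanSpace ℝ (Fin k), ‖u‖ < ε ∧ a x + ⟪b x, u⟫ ≤ -α ‖x.1‖)
    (H : EuclideanSpace ℝ (Fin m) × EuclideanSpace ℝ (Fin p) → EuclideanSpace ℝ (Fin k))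
    (hH : ∀ x, H x =
      if b x = 0 then 0
      else if 2 * Real.sqrt ((a x) ^ 2 + ‖b x‖ ^ 4) ≥ α ‖x.1‖ then
        (-(a x + Real.sqrt ((a x) ^ 2 + ‖b x‖ ^ 4)) / ‖b x‖ ^ 2) • b x
      else (-(2 * a x + α ‖x.1‖) / (2 * ‖b x‖ ^ 2)) • b x) :
    ContinuousOn H D ∧ (∀ x ∈ D, b x = 0 → H x = 0) ∧
      (∀ z : EuclideanSpace ℝ (Fin p),
        ((0 : EuclideanSpace ℝ (Fin m)), z) ∈ D → b (0, z) = 0 → H (0, z) = 0) := by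
  have hHF : H = fun x => sontagFeedback (a x) (b x) (α ‖x.1‖) := by
    funext x; rw [hH x, sontagFeedback]; congr
  have hH0 : ∀ x, b x = 0 → H x = 0 := fun x hbx => by simp [hHF, hbx]
  refine ⟨fun x₀ hx₀ => ?_, fun x _ => hH0 x, fun z _ => hH0 (0, z)⟩
  have hc : ContinuousWithinAt (fun x => α ‖x.1‖) D x₀ :=
    (hαcont.comp (by fun_prop) fun x _ => norm_nonneg x.1) x₀ hx₀
  have hc0 : ∀ᶠ x in 𝓝[D] x₀, 0 ≤ α ‖x.1‖ := .of_forall fun x => hαnonneg _ (norm_nonneg _)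
  rcases ne_or_eq (b x₀) 0 with hbx₀ | hbx₀
  · rw [hHF]
    exact (ha x₀ hx₀).sontagFeedback (hb x₀ hx₀) hc hbx₀
  have hb0 : Tendsto b (𝓝[D] x₀) (𝓝 0) := hbx₀ ▸ hb x₀ hx₀
  rw [ContinuousWithinAt, hH0 x₀ hbx₀, hHF]
  by_cases hy : x₀.1 = 0
  · refine tendsto_sontagFeedback_zero_of_small_control hc0 hb0 fun ε hε => ?_
    obtain ⟨δ, hδ, hu⟩ := hscp ε hε x₀ hx₀ hy
    filter_upwards [self_mem_nhdsWithin, mem_nhdsWithin_of_mem_nhds (Metric.ball_mem_nhds x₀ hδ)]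
      with x hxD hxδ
    exact hu x hxD (by rwa [← dist_eq_norm])
  · have hαpos : 0 < α ‖x₀.1‖ :=
      hα0 ▸ hαmono Set.self_mem_Ici (norm_nonneg x₀.1) (norm_pos_iff.2 hy)
    have hneg : 2 * a x₀ + α ‖x₀.1‖ < 0 := by linarith [hclf x₀ hx₀ hbx₀]
    refine tendsto_sontagFeedback_zero hc0 hb0 fun ε hε => ?_
    filter_upwards [((ha x₀ hx₀).const_mul 2).add hc |>.eventually_lt_const hneg] with x hx
    exact hx.le.trans (by positivity)

theorem sontag_partial_feedback_continuous
    (m p k : ℕ) (hm : 1 ≤ m) (hp : 1 ≤ p) (hk : 1 ≤ k)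
    (Hbound : ℝ) (hHbound : 0 < Hbound)
    (D : Set (EuclideanSpace ℝ (Fin m) × EuclideanSpace ℝ (Fin p)))
    (hD : D = {x | ‖x.1‖ ≤ Hbound})
    (a : EuclideanSpace ℝ (Fin m) × EuclideanSpace ℝ (Fin p) → ℝ)
    (b : EuclideanSpace ℝ (Fin m) × EuclideanSpace ℝ (Fin p) → EuclideanSpace ℝ (Fin k))
    (ha : ContinuousOn a D) (hb : ContinuousOn b D)
    (α : ℝ → ℝ)
    (hαcont : ContinuousOn α (Set.Ici 0))
    (hαmono : StrictMonoOn α (Set.Ici 0))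
    (hα0 : α 0 = 0)
    (hαnonneg : ∀ r ∈ Set.Ici (0 : ℝ), 0 ≤ α r)
    -- (i) control Lyapunov condition
    (hclf : ∀ x ∈ D, b x = 0 → a x ≤ -α ‖x.1‖)
    -- (ii) small control property
    (hscp : ∀ ε > (0 : ℝ), ∀ x₀ ∈ D, x₀.1 = 0 →
      ∃ δ > (0 : ℝ), ∀ x ∈ D, ‖x - x₀‖ < δ →
        ∃ u : EuclideanSpace ℝ (Fin k), ‖u‖ < ε ∧ a x + ⟪b x, u⟫ ≤ -α ‖x.1‖)
    (H : EuclideanSpace ℝ (Fin m) × EuclideanSpace ℝ (Fin p) → EuclideanSpace ℝ (Fin k))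
    (hH : ∀ x, H x =
      if b x = 0 then 0
      else if 2 * Real.sqrt ((a x) ^ 2 + ‖b x‖ ^ 4) ≥ α ‖x.1‖ then
        (-(a x + Real.sqrt ((a x) ^ 2 + ‖b x‖ ^ 4)) / ‖b x‖ ^ 2) • b x
      else (-(2 * a x + α ‖x.1‖) / (2 * ‖b x‖ ^ 2)) • b x) :
    ContinuousOn H D ∧ (∀ x ∈ D, b x = 0 → H x = 0) ∧
      (∀ z : EuclideanSpace ℝ (Fin p),
        ((0 : EuclideanSpace ℝ (Fin m)), z) ∈ D → b (0, z) = 0 → H (0, z) = 0) :=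
  sontag_partial_feedback_continuous_general m p k D a b ha hb α hαcont hαmono hα0 hαnonneg hclf
    hscp H hH
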